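/- arXiv:1407.1004 — 3 statements merged into one kernel-verified Lean document; each statement's English description precedes it below -/
import Mathlib

section
/- For every x ∈ R^n and every index i, the partial derivative ∂φ_i/∂x_i(x) is strictly positive, and for every j ≠ i the partial derivative ∂φ_i/∂x_j(x) is strictly negative. -/
/-- The fixed-point map `φ` for the ML equations of the beta model for `k`-uniform
hypergraphs on `n` nodes: `φ_i(x) = log d_i − log ∑_s e^{x̃_s}/(1 + e^{x̃_s + x_i})`,
the sum over all `(k−1)`-element subsets `s` of `{1,…,n} \ {i}`. -/
noncomputable def phi (n k : ℕ) (d : Fin n → ℝ) (x : Fin n → ℝ) (i : Fin n) : ℝ :=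
  Real.log (d i) -
    Real.log (∑ s ∈ Finset.powersetCard (k - 1) (Finset.univ.erase i),
      Real.exp (∑ j ∈ s, x j) / (1 + Real.exp ((∑ j ∈ s, x j) + x i)))

/-!
Rewriting each summand as `e^{x̃_s} / (1 + e^{x̃_s + x_i}) = 1 / (e^{-x̃_s} + e^{x_i})` makes the
signs visible: a summand increases in every `x_j` with `j ∈ s` and decreases in `x_i`, while
`i ∉ s`. Hence the positive sum `S_i` inside the logarithm is strictly decreasing in `x_i` and
weakly increasing in `x_j` for `j ≠ i`, strictly so because `2 ≤ k < n` leaves room for a set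
`s ∌ i` of size `k - 1` containing `j`. Since `∂φ_i/∂x_j = -(∂S_i/∂x_j) / S_i`, the signs flip.
-/

open Real Finset

lemma exp_div_one_add_exp_add (a b : ℝ) :
    exp a / (1 + exp (a + b)) = (exp (-a) + exp b)⁻¹ := by
  rw [exp_add, exp_neg]
  field_simp

section Calculus

variable {E : Type*} [NormedAddCommGroup E] [NormedSpace ℝ E] {x : E}

lemma HasFDerivAt.inv_exp_neg_add_exp {u v : E → ℝ} {u' v' : E →L[ℝ] ℝ}
    (hu : HasFDerivAt u u' x) (hv : HasFDerivAt v v' x) :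
    HasFDerivAt (fun y => (Real.exp (-u y) + Real.exp (v y))⁻¹)
      (((Real.exp (-u x) + Real.exp (v x)) ^ 2)⁻¹ •
        (Real.exp (-u x) • u' - Real.exp (v x) • v')) x := by
  have hD : Real.exp (-u x) + Real.exp (v x) ≠ 0 := by positivity
  refine ((hasDerivAt_inv hD).comp_hasFDerivAt x (hu.fun_neg.exp.add hv.exp)).congr_fderiv ?_
  ext h
  simp only [smul_neg, smul_add, neg_smul, neg_neg, add_apply, smul_apply, smul_eq_mul,
    neg_apply, sub_apply]
  ring

lemma fderiv_const_sub_log_apply {S : E → ℝ} (hS : DifferentiableAt ℝ S x) (hSx : S x ≠ 0)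
    (c : ℝ) (h : E) :
    fderiv ℝ (fun y => c - log (S y)) x h = -fderiv ℝ S x h / S x := by
  rw [((hS.hasFDerivAt.log hSx).const_sub c).fderiv]
  simp [div_eq_inv_mul]

end Calculus

section BetaModel

variable {n : ℕ} {i j : Fin n} {s : Finset (Fin n)} {x : Fin n → ℝ}

noncomputable def betaTerm (i : Fin n) (s : Finset (Fin n)) (y : Fin n → ℝ) : ℝ :=
  (exp (-∑ j ∈ s, y j) + exp (y i))⁻¹

lemma betaTerm_pos : 0 < betaTerm i s x := by
  unfold betaTerm
  positivity

lemma phi_eq_log_sub_log_sum_betaTerm (k : ℕ) (d : Fin n → ℝ) (i : Fin n) :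
    (fun y => phi n k d y i) =
      fun y => log (d i) - log (∑ s ∈ powersetCard (k - 1) (univ.erase i), betaTerm i s y) := by
  funext y
  simp only [phi, betaTerm, exp_div_one_add_exp_add]

lemma hasFDerivAt_betaTerm (i : Fin n) (s : Finset (Fin n)) (x : Fin n → ℝ) :
    HasFDerivAt (betaTerm i s)
      (((exp (-∑ j ∈ s, x j) + exp (x i)) ^ 2)⁻¹ •
        (exp (-∑ j ∈ s, x j) •
            (∑ j ∈ s, ContinuousLinearMap.proj j : (Fin n → ℝ) →L[ℝ] ℝ) -
          exp (x i) • (ContinuousLinearMap.proj i : (Fin n → ℝ) →L[ℝ] ℝ))) x :=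
  (HasFDerivAt.fun_sum fun j _ => hasFDerivAt_apply j x).inv_exp_neg_add_exp
    (hasFDerivAt_apply i x)

lemma fderiv_betaTerm_single (i j : Fin n) (s : Finset (Fin n)) (x : Fin n → ℝ) :
    fderiv ℝ (betaTerm i s) x (Pi.single j 1) =
      ((exp (-∑ l ∈ s, x l) + exp (x i)) ^ 2)⁻¹ *
        (exp (-∑ l ∈ s, x l) * (if j ∈ s then 1 else 0) -
          exp (x i) * (if j = i then 1 else 0)) := by
  rw [(hasFDerivAt_betaTerm i s x).fderiv]
  simp [Pi.single_apply, eq_comm]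

lemma fderiv_betaTerm_single_self_neg (hi : i ∉ s) :
    fderiv ℝ (betaTerm i s) x (Pi.single i 1) < 0 := by
  rw [fderiv_betaTerm_single, if_neg hi, if_pos rfl, mul_zero, mul_one, zero_sub]
  exact mul_neg_of_pos_of_neg (by positivity) (neg_neg_of_pos (exp_pos _))

lemma fderiv_betaTerm_single_nonneg (hji : j ≠ i) :
    0 ≤ fderiv ℝ (betaTerm i s) x (Pi.single j 1) := by
  rw [fderiv_betaTerm_single, if_neg hji, mul_zero, sub_zero]
  split_ifs <;> positivity

lemma fderiv_betaTerm_single_pos (hji : j ≠ i) (hj : j ∈ s) :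
    0 < fderiv ℝ (betaTerm i s) x (Pi.single j 1) := by
  rw [fderiv_betaTerm_single, if_neg hji, if_pos hj, mul_zero, sub_zero]
  positivity

lemma fderiv_phi_apply {k : ℕ} (d : Fin n → ℝ)
    (hP : (powersetCard (k - 1) (univ.erase i)).Nonempty) (h : Fin n → ℝ) :
    fderiv ℝ (fun y => phi n k d y i) x h =
      -(∑ s ∈ powersetCard (k - 1) (univ.erase i), fderiv ℝ (betaTerm i s) x h) /
        ∑ s ∈ powersetCard (k - 1) (univ.erase i), betaTerm i s x := by
  have hS := fun s (_ : s ∈ powersetCard (k - 1) (univ.erase i)) =>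
    (hasFDerivAt_betaTerm i s x).differentiableAt
  rw [phi_eq_log_sub_log_sum_betaTerm,
    fderiv_const_sub_log_apply (DifferentiableAt.fun_sum hS)
      (sum_pos (fun _ _ => betaTerm_pos) hP).ne',
    fderiv_fun_sum hS, _root_.sum_apply]

end BetaModel

theorem stmt2_general (n k : ℕ) (hk : 2 ≤ k) (hkn : k < n) (d : Fin n → ℝ)
    (x : Fin n → ℝ) (i : Fin n) :
    0 < fderiv ℝ (fun y => phi n k d y i) x (Pi.single i 1) ∧
    ∀ j : Fin n, j ≠ i → fderiv ℝ (fun y => phi n k d y i) x (Pi.single j 1) < 0 := by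
  have hcard : #(univ.erase i) = n - 1 := by simp
  have hP : (powersetCard (k - 1) (univ.erase i)).Nonempty :=
    powersetCard_nonempty.2 (by omega)
  have hS : 0 < ∑ s ∈ powersetCard (k - 1) (univ.erase i), betaTerm i s x :=
    sum_pos (fun _ _ => betaTerm_pos) hP
  refine ⟨?_, fun j hji => ?_⟩
  · rw [fderiv_phi_apply d hP]
    refine div_pos (neg_pos.2 (sum_neg (fun s hs => fderiv_betaTerm_single_self_neg ?_) hP)) hS
    exact fun hi => notMem_erase i univ ((mem_powersetCard.1 hs).1 hi)
  · obtain ⟨s, hjs, hs, hscard⟩ := exists_subsuperset_card_eq (n := k - 1)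
      (singleton_subset_iff.2 (mem_erase.2 ⟨hji, mem_univ j⟩)) (by rw [card_singleton]; omega)
      (by rw [hcard]; omega)
    rw [fderiv_phi_apply d hP]
    refine div_neg_of_neg_of_pos (neg_neg_of_pos (sum_pos' (fun _ _ =>
      fderiv_betaTerm_single_nonneg hji) ⟨s, mem_powersetCard.2 ⟨hs, hscard⟩, ?_⟩)) hS
    exact fderiv_betaTerm_single_pos hji (singleton_subset_iff.1 hjs)

/-- For every `x ∈ ℝⁿ` and index `i`, `∂φ_i/∂x_i(x) > 0`, and for every
`j ≠ i`, `∂φ_i/∂x_j(x) < 0`. -/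
theorem stmt2 (n k : ℕ) (hk : 2 ≤ k) (hkn : k < n) (d : Fin n → ℝ) (hd : ∀ i, 0 < d i)
    (x : Fin n → ℝ) (i : Fin n) :
    0 < fderiv ℝ (fun y => phi n k d y i) x (Pi.single i 1) ∧
    ∀ j : Fin n, j ≠ i → fderiv ℝ (fun y => phi n k d y i) x (Pi.single j 1) < 0 :=
  stmt2_general n k hk hkn d x i
end

section
/- Let K ≥ 0 and x ∈ R^n with |x|_∞ ≤ K. Then for every index i and every (k−1)-element subset s of {1,…,n} \ {i}, the normalized quantity q_{is}(x) = r_{is}(x) / Σ_{s'} r_{is'}(x) (the sum over all (k−1)-element subsets s' of {1,…,n} \ {i}) satisfies e^{−2(k−1)K}/C(n−1, k−1) ≤ q_{is}(x) ≤ e^{2(k−1)K}/C(n−1, k−1), where C(n−1, k−1) is the binomial coefficient. -/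
/-!
Writing `r_{is}(x) = 1 / (e^{-x̃_s} + e^{x_i})`, the weight `r_{is}` changes by at most a factor
`e^d` when `x̃_s` moves by `d`. Since every `x̃_s` with `|s| = k - 1` lies in `[-(k-1)K, (k-1)K]`,
any two of the `C(n-1, k-1)` weights `r_{is'}` are within a factor `e^{2(k-1)K}` of each other,
and so is each of them from their average.
-/

open Finset

/-- `r_{is}(x) = e^{x̃_s}/(1 + e^{x̃_s + x_i})` where `x̃_s = ∑_{j ∈ s} x_j`. -/
noncomputable def rq (n : ℕ) (x : Fin n → ℝ) (i : Fin n) (s : Finset (Fin n)) : ℝ :=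
  Real.exp (∑ j ∈ s, x j) / (1 + Real.exp ((∑ j ∈ s, x j) + x i))

/-- `q_{is}(x) = r_{is}(x) / ∑_{s'} r_{is'}(x)`, the sum over all `(k−1)`-element
subsets `s'` of `{1,…,n} \ {i}`. -/
noncomputable def qq (n k : ℕ) (x : Fin n → ℝ) (i : Fin n) (s : Finset (Fin n)) : ℝ :=
  rq n x i s / ∑ s' ∈ Finset.powersetCard (k - 1) (Finset.univ.erase i), rq n x i s'

section ShareOfSum

variable {ι : Type*} {P : Finset ι} {f : ι → ℝ} {c : ℝ} {s : ι}

theorem div_sum_le_div_card_of_le_mul (hs : s ∈ P) (hf : ∀ t ∈ P, 0 < f t)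
    (hc : ∀ t ∈ P, f s ≤ c * f t) : f s / ∑ t ∈ P, f t ≤ c / #P := by
  have hsum : 0 < ∑ t ∈ P, f t := sum_pos hf ⟨s, hs⟩
  have hcard : (0 : ℝ) < #P := by exact_mod_cast card_pos.2 ⟨s, hs⟩
  rw [div_le_div_iff₀ hsum hcard]
  calc f s * #P = ∑ _t ∈ P, f s := by rw [sum_const, nsmul_eq_mul, mul_comm]
    _ ≤ ∑ t ∈ P, c * f t := sum_le_sum hc
    _ = c * ∑ t ∈ P, f t := (mul_sum P f c).symm

theorem inv_div_card_le_div_sum_of_le_mul (hs : s ∈ P) (hf : ∀ t ∈ P, 0 < f t) (hc₀ : 0 < c)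
    (hc : ∀ t ∈ P, f t ≤ c * f s) : c⁻¹ / #P ≤ f s / ∑ t ∈ P, f t := by
  have hsum : 0 < ∑ t ∈ P, f t := sum_pos hf ⟨s, hs⟩
  have hcard : (0 : ℝ) < #P := by exact_mod_cast card_pos.2 ⟨s, hs⟩
  rw [div_le_div_iff₀ hcard hsum, inv_mul_le_iff₀ hc₀]
  calc ∑ t ∈ P, f t ≤ ∑ _t ∈ P, c * f s := sum_le_sum hc
    _ = c * (f s * #P) := by rw [sum_const, nsmul_eq_mul]; ring

end ShareOfSum

theorem abs_sum_le_card_mul_norm {ι : Type*} [Fintype ι] (x : ι → ℝ) (s : Finset ι) :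
    |∑ j ∈ s, x j| ≤ #s * ‖x‖ := by
  calc |∑ j ∈ s, x j| ≤ ∑ j ∈ s, |x j| := abs_sum_le_sum_abs x s
    _ ≤ #s • ‖x‖ := sum_le_card_nsmul s _ _ fun j _ => norm_le_pi_norm x j
    _ = #s * ‖x‖ := nsmul_eq_mul _ _

theorem rq_eq_inv (n : ℕ) (x : Fin n → ℝ) (i : Fin n) (s : Finset (Fin n)) :
    rq n x i s = (Real.exp (-∑ j ∈ s, x j) + Real.exp (x i))⁻¹ := by
  rw [rq, ← inv_div, add_div, one_div, ← Real.exp_neg, Real.exp_add,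
    mul_div_cancel_left₀ _ (Real.exp_pos _).ne']

theorem rq_le_exp_mul_rq {n : ℕ} {x : Fin n → ℝ} {i : Fin n} {s t : Finset (Fin n)} {d : ℝ}
    (hd : 0 ≤ d) (hst : ∑ j ∈ t, x j ≤ ∑ j ∈ s, x j + d) :
    rq n x i t ≤ Real.exp d * rq n x i s := by
  rw [rq_eq_inv, rq_eq_inv, ← div_eq_mul_inv, le_div_iff₀ (by positivity),
    inv_mul_le_iff₀ (by positivity), add_mul, ← Real.exp_add]
  gcongr
  · linarith
  · exact le_mul_of_one_le_right (Real.exp_pos _).le (Real.one_le_exp hd)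

theorem stmt4_general (n k : ℕ) (hk : 2 ≤ k) (K : ℝ)
    (x : Fin n → ℝ) (hx : ‖x‖ ≤ K) (i : Fin n) (s : Finset (Fin n))
    (hs : s ∈ Finset.powersetCard (k - 1) (Finset.univ.erase i)) :
    Real.exp (-(2 * ((k : ℝ) - 1) * K)) / ((n - 1).choose (k - 1) : ℝ) ≤ qq n k x i s ∧
    qq n k x i s ≤ Real.exp (2 * ((k : ℝ) - 1) * K) / ((n - 1).choose (k - 1) : ℝ) := by
  set P := powersetCard (k - 1) (univ.erase i)
  have hM : 0 ≤ ((k : ℝ) - 1) * K :=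
    mul_nonneg (by norm_num; omega) ((norm_nonneg x).trans hx)
  have hsum_le : ∀ t ∈ P, |∑ j ∈ t, x j| ≤ ((k : ℝ) - 1) * K := fun t ht => by
    have hcard : (#t : ℝ) = (k : ℝ) - 1 := by
      rw [(mem_powersetCard.1 ht).2, Nat.cast_sub (by omega), Nat.cast_one]
    exact (abs_sum_le_card_mul_norm x t).trans (hcard ▸ mul_le_mul_of_nonneg_left hx (by linarith))
  have hcomp : ∀ t ∈ P, ∀ u ∈ P, rq n x i t ≤ Real.exp (2 * ((k : ℝ) - 1) * K) * rq n x i u :=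
    fun t ht u hu => rq_le_exp_mul_rq (by linarith) (by
      linarith [(abs_le.1 (hsum_le t ht)).2, (abs_le.1 (hsum_le u hu)).1])
  have hpos : ∀ t ∈ P, 0 < rq n x i t := fun t _ => by rw [rq_eq_inv]; positivity
  have hcardP : (#P : ℝ) = ((n - 1).choose (k - 1) : ℝ) := by
    rw [card_powersetCard, card_erase_of_mem (mem_univ i), card_univ, Fintype.card_fin]
  rw [qq, ← hcardP, Real.exp_neg]
  exact ⟨inv_div_card_le_div_sum_of_le_mul hs hpos (Real.exp_pos _) fun t ht => hcomp t ht s hs,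
    div_sum_le_div_card_of_le_mul hs hpos fun t ht => hcomp s hs t ht⟩

/-- If `K ≥ 0` and `|x|_∞ ≤ K`, then for every index `i` and every
`(k−1)`-element subset `s` of `{1,…,n} \ {i}`,
`e^{−2(k−1)K}/C(n−1,k−1) ≤ q_{is}(x) ≤ e^{2(k−1)K}/C(n−1,k−1)`. -/
theorem stmt4 (n k : ℕ) (hk : 2 ≤ k) (hkn : k < n) (K : ℝ) (hK : 0 ≤ K)
    (x : Fin n → ℝ) (hx : ‖x‖ ≤ K) (i : Fin n) (s : Finset (Fin n))
    (hs : s ∈ Finset.powersetCard (k - 1) (Finset.univ.erase i)) :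
    Real.exp (-(2 * ((k : ℝ) - 1) * K)) / ((n - 1).choose (k - 1) : ℝ) ≤ qq n k x i s ∧
    qq n k x i s ≤ Real.exp (2 * ((k : ℝ) - 1) * K) / ((n - 1).choose (k - 1) : ℝ) :=
  stmt4_general n k hk K x hx i s hs
end

section
/- Let K ≥ 0 and x ∈ R^n with |x|_∞ ≤ K. Then for every index i, the diagonal partial derivative satisfies ∂φ_i/∂x_i(x) ≥ (1/2)e^{−4(k−1)K}. -/
/-!
Since `i ∉ s`, moving `x` along `e_i` changes only the denominators, and the summand for `s` is
`e^{x̃_s} σ(-(x̃_s + x_i))` with `σ` the logistic sigmoid. As `σ' = σ (1 - σ)` and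
`1 - σ(a) = σ(-a)`, the derivative `∂φ_i/∂x_i` is the average of the values `σ(x̃_s + x_i)` with the
positive weights `e^{x̃_s} σ(-(x̃_s + x_i))`. Each of these values is at least `e^{-kK}/2`, because
`|x̃_s + x_i| ≤ kK`, and `kK ≤ 4(k-1)K` for `k ≥ 2`.
-/

open Real Finset

lemma Real.sigmoid_neg_eq_inv_one_add_exp (a : ℝ) : sigmoid (-a) = (1 + exp a)⁻¹ := by
  rw [sigmoid_def, neg_neg]

lemma Real.half_exp_neg_le_sigmoid {y M : ℝ} (h : |y| ≤ M) : exp (-M) / 2 ≤ sigmoid y := by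
  have hM : 1 ≤ exp M := one_le_exp ((abs_nonneg y).trans h)
  have hy : exp (-y) ≤ exp M := exp_le_exp.mpr ((neg_le_abs y).trans h)
  calc exp (-M) / 2 = (2 * exp M)⁻¹ := by rw [exp_neg]; field_simp
    _ ≤ (1 + exp (-y))⁻¹ := inv_anti₀ (by positivity) (by linarith)
    _ = sigmoid y := (sigmoid_def y).symm

lemma Real.hasDerivAt_sigmoid_neg_add (a t : ℝ) :
    HasDerivAt (fun t => sigmoid (-(a + t))) (-(sigmoid (-(a + t)) * sigmoid (a + t))) t := by
  refine ((hasDerivAt_sigmoid _).comp t ((hasDerivAt_id t).const_add a).neg).congr_deriv ?_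
  simp only [Pi.neg_apply, id, sigmoid_neg (a + t)]
  ring

lemma hasDerivAt_log_sum_mul_sigmoid_neg_add {ι : Type*} (P : Finset ι) (w a : ι → ℝ) (t : ℝ)
    (h : ∑ s ∈ P, w s * sigmoid (-(a s + t)) ≠ 0) :
    HasDerivAt (fun t => log (∑ s ∈ P, w s * sigmoid (-(a s + t))))
      (-(∑ s ∈ P, w s * sigmoid (-(a s + t)) * sigmoid (a s + t)) /
        ∑ s ∈ P, w s * sigmoid (-(a s + t))) t := by
  convert (HasDerivAt.fun_sum fun s _ =>
    (hasDerivAt_sigmoid_neg_add (a s) t).const_mul (w s)).log h using 1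
  simp only [mul_neg, sum_neg_distrib, mul_assoc]

lemma le_sum_mul_div_sum {ι : Type*} {P : Finset ι} {v f : ι → ℝ} {c : ℝ}
    (hv : ∀ s ∈ P, 0 ≤ v s) (hpos : 0 < ∑ s ∈ P, v s) (hf : ∀ s ∈ P, c ≤ f s) :
    c ≤ (∑ s ∈ P, v s * f s) / ∑ s ∈ P, v s := by
  rw [le_div_iff₀ hpos, mul_comm, sum_mul]
  exact sum_le_sum fun s hs => mul_le_mul_of_nonneg_left (hf s hs) (hv s hs)

lemma abs_sum_le_card_mul_of_norm_le {ι : Type*} [Fintype ι] {x : ι → ℝ} {K : ℝ} (hx : ‖x‖ ≤ K)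
    (s : Finset ι) : |∑ j ∈ s, x j| ≤ s.card * K := by
  simpa using norm_sum_le_of_le s fun j _ => (norm_le_pi_norm x j).trans hx

lemma powersetCard_pred_erase_nonempty {n k : ℕ} (hkn : k ≤ n) (i : Fin n) :
    (powersetCard (k - 1) (univ.erase i)).Nonempty := by
  rw [powersetCard_nonempty, card_erase_of_mem (mem_univ i), card_univ, Fintype.card_fin]
  omega

lemma abs_sum_add_apply_le {n k : ℕ} (hk : 1 ≤ k) {x : Fin n → ℝ} {K : ℝ} (hx : ‖x‖ ≤ K)
    {i : Fin n} {s : Finset (Fin n)} (hs : s ∈ powersetCard (k - 1) (univ.erase i)) :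
    |∑ j ∈ s, x j + x i| ≤ k * K := by
  have hcard : (s.card : ℝ) = k - 1 := by
    rw [(mem_powersetCard.mp hs).2, Nat.cast_sub hk, Nat.cast_one]
  calc |∑ j ∈ s, x j + x i| ≤ |∑ j ∈ s, x j| + |x i| := abs_add_le _ _
    _ ≤ (k - 1) * K + K := by
      gcongr
      · exact hcard ▸ abs_sum_le_card_mul_of_norm_le hx s
      · exact (norm_le_pi_norm x i).trans hx
    _ = k * K := by ring

lemma phi_add_smul_single (n k : ℕ) (d x : Fin n → ℝ) (i : Fin n) (t : ℝ) :
    phi n k d (x + t • Pi.single i 1) i =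
      log (d i) - log (∑ s ∈ powersetCard (k - 1) (univ.erase i),
        exp (∑ j ∈ s, x j) * sigmoid (-(∑ j ∈ s, x j + x i + t))) := by
  have hsum (s) (hs : s ∈ powersetCard (k - 1) (univ.erase i)) :
      ∑ j ∈ s, (x + t • Pi.single i 1 : Fin n → ℝ) j = ∑ j ∈ s, x j := by
    refine sum_congr rfl fun j hj => ?_
    have hji : j ≠ i := ne_of_mem_erase (mem_powersetCard.mp hs |>.1 hj)
    simp [hji]
  unfold phi
  congr 2
  refine sum_congr rfl fun s hs => ?_
  rw [hsum s hs, div_eq_mul_inv, ← sigmoid_neg_eq_inv_one_add_exp]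
  simp [add_assoc]

lemma differentiable_phi {n k : ℕ} (hkn : k ≤ n) (d : Fin n → ℝ) (i : Fin n) :
    Differentiable ℝ (fun y => phi n k d y i) := by
  intro y
  refine (DifferentiableAt.log (by fun_prop (disch := positivity)) ?_).const_sub _
  exact (sum_pos (fun s _ => by positivity) (powersetCard_pred_erase_nonempty hkn i)).ne'

lemma fderiv_phi_apply_single {n k : ℕ} (hkn : k ≤ n) (d x : Fin n → ℝ) (i : Fin n) :
    fderiv ℝ (fun y => phi n k d y i) x (Pi.single i 1) =
      (∑ s ∈ powersetCard (k - 1) (univ.erase i), exp (∑ j ∈ s, x j) *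
          sigmoid (-(∑ j ∈ s, x j + x i)) * sigmoid (∑ j ∈ s, x j + x i)) /
        ∑ s ∈ powersetCard (k - 1) (univ.erase i), exp (∑ j ∈ s, x j) *
          sigmoid (-(∑ j ∈ s, x j + x i)) := by
  have hpos : 0 < ∑ s ∈ powersetCard (k - 1) (univ.erase i), exp (∑ j ∈ s, x j) *
      sigmoid (-(∑ j ∈ s, x j + x i + 0)) :=
    sum_pos (fun s _ => mul_pos (exp_pos _) (sigmoid_pos _))
      (powersetCard_pred_erase_nonempty hkn i)
  rw [← (differentiable_phi hkn d i x).lineDeriv_eq_fderiv, lineDeriv]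
  simp_rw [phi_add_smul_single]
  rw [((hasDerivAt_log_sum_mul_sigmoid_neg_add _ _ _ 0 hpos.ne').const_sub _).deriv]
  simp [neg_div]

theorem stmt5_general (n k : ℕ) (hk : 2 ≤ k) (hkn : k < n) (d : Fin n → ℝ)
    (K : ℝ) (x : Fin n → ℝ) (hx : ‖x‖ ≤ K) (i : Fin n) :
    (1 / 2) * Real.exp (-(4 * ((k : ℝ) - 1) * K)) ≤
      fderiv ℝ (fun y => phi n k d y i) x (Pi.single i 1) := by
  have hP := powersetCard_pred_erase_nonempty hkn.le i
  have hK : 0 ≤ K := (norm_nonneg x).trans hx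
  have hk' : (2 : ℝ) ≤ k := by exact_mod_cast hk
  rw [fderiv_phi_apply_single hkn.le]
  refine le_sum_mul_div_sum (fun s _ => (mul_pos (exp_pos _) (sigmoid_pos _)).le)
    (sum_pos (fun s _ => mul_pos (exp_pos _) (sigmoid_pos _)) hP) fun s hs => ?_
  calc 1 / 2 * exp (-(4 * ((k : ℝ) - 1) * K)) ≤ exp (-(k * K)) / 2 := by
        rw [one_div_mul_eq_div]
        gcongr
        nlinarith
    _ ≤ sigmoid (∑ j ∈ s, x j + x i) :=
        half_exp_neg_le_sigmoid (abs_sum_add_apply_le (by omega) hx hs)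

/-- If `K ≥ 0` and `|x|_∞ ≤ K`, then for every index `i`,
`∂φ_i/∂x_i(x) ≥ (1/2)e^{−4(k−1)K}`. -/
theorem stmt5 (n k : ℕ) (hk : 2 ≤ k) (hkn : k < n) (d : Fin n → ℝ) (hd : ∀ i, 0 < d i)
    (K : ℝ) (hK : 0 ≤ K) (x : Fin n → ℝ) (hx : ‖x‖ ≤ K) (i : Fin n) :
    (1 / 2) * Real.exp (-(4 * ((k : ℝ) - 1) * K)) ≤
      fderiv ℝ (fun y => phi n k d y i) x (Pi.single i 1) :=
  stmt5_general n k hk hkn d K x hx i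
end
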